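/- arXiv:1105.2542 — 2 statements merged into one kernel-verified Lean document; each statement's English description precedes it below -/
import Mathlib

section
/- Let ε = (1+√5)/2. For every integer n ≥ 4, we have (-1)^n · ε^(2-2n) + ε^(1-n) + 1 ≠ (-1)^(n-1) · ε^(3-2n) + 1. -/
theorem eps_invariant_values_ne (n : ℤ) (hn : 4 ≤ n) :
    (-1 : ℝ) ^ n * ((1 + Real.sqrt 5) / 2) ^ (2 - 2 * n)
      + ((1 + Real.sqrt 5) / 2) ^ (1 - n) + 1
      ≠ (-1 : ℝ) ^ (n - 1) * ((1 + Real.sqrt 5) / 2) ^ (3 - 2 * n) + 1 := by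
  set x : ℝ := (1 + Real.sqrt 5) / 2 with hxdef
  clear_value x
  have h5 : Real.sqrt 5 ^ 2 = 5 := Real.sq_sqrt (by norm_num)
  have h5n : 1 ≤ Real.sqrt 5 := by nlinarith [Real.sqrt_nonneg 5]
  have hx1 : 1 < x := by rw [hxdef]; nlinarith
  have hx0 : x ≠ 0 := by positivity
  have hsq : x ^ (2:ℤ) = x + 1 := by
    rw [hxdef]
    rw [zpow_two]
    nlinarith
  intro h
  have h' : (-1 : ℝ) ^ n * x ^ (2 - 2 * n) + x ^ (1 - n)
      = (-1 : ℝ) ^ (n - 1) * x ^ (3 - 2 * n) := by linarith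
  have hmul := congrArg (· * x ^ (2 * n - 2)) h'
  simp only [add_mul, mul_assoc, ← zpow_add₀ hx0] at hmul
  norm_num at hmul
  rw [show (1 - n + (2 * n - 2)) = n - 1 by ring] at hmul
  -- hmul : (-1)^n * x^0 + x^(n-1) = (-1)^(n-1) * x^1  (after ring_nf of exponents)
  have hxn : x ^ ((3:ℤ)) ≤ x ^ (n - 1) := by
    apply zpow_le_zpow_right₀ hx1.le
    omega
  have hx3 : x ^ (3:ℤ) = x * (x + 1) := by
    rw [show (3:ℤ) = 2 + 1 by ring, zpow_add₀ hx0, hsq, zpow_one]; ring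
  have hs : (-1:ℝ) ^ (n-1) = -((-1:ℝ)^n) := by
    rw [zpow_sub₀ (by norm_num : (-1:ℝ) ≠ 0)]
    norm_num
    rw [div_neg, div_one]
  have hpos : (0:ℝ) < x ^ (n - 1) := zpow_pos (by linarith) _
  rcases Int.even_or_odd n with he | ho
  · have : (-1:ℝ)^n = 1 := he.neg_one_zpow
    rw [this] at hmul hs
    rw [hs] at hmul
    linarith only [hmul, hpos, hx1]
  · have : (-1:ℝ)^n = -1 := ho.neg_one_zpow
    rw [this] at hmul hs
    rw [hs] at hmul
    have hgt : x + 1 < x * (x + 1) := by nlinarith [sq_nonneg (x - 1), hx1]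
    linarith only [hmul, hxn, hx3, hgt]
end

section
/- For integers n ≥ 3 and k with gcd(n, 2-k) = 1, in the group presented by generators x_0, ..., x_{n-1} and the single relation ∏_{i=0}^{n-1} x_{i(2-k)} x_{i(2-k)+1}^{-1} x_{(i+1)(2-k)-1}^{-1} = 1 (indices mod n), the abelianization is free abelian of rank n - 1. -/
section Aux

lemma vec_eq (n : ℕ) (k : ℤ) (hn : 3 ≤ n)
    (hgcd : Int.gcd (n : ℤ) (2 - k) = 1) :
    (fun j : ZMod n => ∑ i : Fin n,
          ((if ((i : ℕ) : ZMod n) * ((2 - k : ℤ) : ZMod n) = j then (1 : ℤ) else 0)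
            - (if ((i : ℕ) : ZMod n) * ((2 - k : ℤ) : ZMod n) + 1 = j then 1 else 0)
            - (if (((i : ℕ) : ZMod n) + 1) * ((2 - k : ℤ) : ZMod n) - 1 = j then 1 else 0)))
      = fun _ => (-1 : ℤ) := by
  haveI : NeZero n := ⟨by omega⟩
  set c : ZMod n := ((2 - k : ℤ) : ZMod n) with hc
  -- c is a unit
  obtain ⟨a, b, hab⟩ := Int.isCoprime_iff_gcd_eq_one.mpr hgcd
  have hbc : (b : ZMod n) * c = 1 := by
    have h := congrArg (Int.cast : ℤ → ZMod n) hab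
    push_cast at h
    rw [ZMod.natCast_self, mul_zero, zero_add] at h
    rw [hc]; push_cast; exact h
  -- the map i ↦ ↑↑i * c is bijective Fin n → ZMod n
  have hσ : Function.Bijective (fun i : Fin n => ((i : ℕ) : ZMod n) * c) := by
    have h1 : Function.Bijective (fun i : Fin n => ((i : ℕ) : ZMod n)) := by
      rw [Fintype.bijective_iff_injective_and_card]
      refine ⟨fun i i' h => ?_, by simp [ZMod.card]⟩
      have := congrArg ZMod.val h
      rwa [ZMod.val_cast_of_lt i.isLt, ZMod.val_cast_of_lt i'.isLt, Fin.val_inj] at this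
    have h2 : Function.Bijective (fun x : ZMod n => x * c) := by
      refine ⟨fun x y h => ?_, fun y => ⟨y * b, ?_⟩⟩
      · have h2 := congrArg (· * (b : ZMod n)) h
        simp only at h2
        rwa [mul_assoc, mul_comm c, hbc, mul_one, mul_assoc, mul_comm c, hbc, mul_one] at h2
      · show y * (b : ZMod n) * c = y
        rw [mul_assoc, hbc, mul_one]
    exact h2.comp h1
  have hsum : ∀ a : ZMod n,
      ∑ i : Fin n, (if ((i : ℕ) : ZMod n) * c = a then (1 : ℤ) else 0) = 1 := by
    intro a
    rw [Fintype.sum_bijective _ hσ _ (fun x => if x = a then (1:ℤ) else 0) (fun i => rfl)]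
    simp
  funext j
  have split : ∑ i : Fin n,
          ((if ((i : ℕ) : ZMod n) * c = j then (1 : ℤ) else 0)
            - (if ((i : ℕ) : ZMod n) * c + 1 = j then 1 else 0)
            - (if (((i : ℕ) : ZMod n) + 1) * c - 1 = j then 1 else 0))
      = (∑ i : Fin n, (if ((i : ℕ) : ZMod n) * c = j then (1 : ℤ) else 0))
        - (∑ i : Fin n, (if ((i : ℕ) : ZMod n) * c = j - 1 then (1 : ℤ) else 0))
        - (∑ i : Fin n, (if ((i : ℕ) : ZMod n) * c = j - (c - 1) then (1 : ℤ) else 0)) := by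
    rw [← Finset.sum_sub_distrib, ← Finset.sum_sub_distrib]
    refine Finset.sum_congr rfl fun i _ => ?_
    congr 1
    · congr 1
      congr 1
      simp [eq_sub_iff_add_eq]
    · have : (((i : ℕ) : ZMod n) + 1) * c - 1 = ((i : ℕ) : ZMod n) * c + (c - 1) := by ring
      rw [this]
      simp [eq_sub_iff_add_eq]
  simp only [split, hsum]
  norm_num

lemma quot_equiv (n : ℕ) (hn : 3 ≤ n) :
    Nonempty (((ZMod n → ℤ) ⧸ Submodule.span ℤ {(fun _ => (-1 : ℤ) : ZMod n → ℤ)})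
      ≃ₗ[ℤ] (Fin (n - 1) → ℤ)) := by
  haveI : NeZero n := ⟨by omega⟩
  let φ : (ZMod n → ℤ) →ₗ[ℤ] (Fin (n - 1) → ℤ) :=
    { toFun := fun f i => f (((i : ℕ) + 1 : ℕ) : ZMod n) - f 0
      map_add' := by intros f g; funext i; simp; ring
      map_smul' := by
        intros r f; funext i
        simp only [smul_eq_mul, Pi.smul_apply, RingHom.id_apply]; ring }
  have hval : ∀ i : Fin (n - 1), (((((i : ℕ) + 1 : ℕ)) : ZMod n)).val = (i : ℕ) + 1 := by
    intro i
    exact ZMod.val_cast_of_lt (by omega)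
  have hsurj : Function.Surjective φ := by
    intro g
    refine ⟨fun j => if h : j.val = 0 then 0 else g ⟨j.val - 1, by have := ZMod.val_lt j; omega⟩, ?_⟩
    funext i
    have h1 : (((((i : ℕ) + 1 : ℕ)) : ZMod n)).val = (i : ℕ) + 1 := hval i
    have h0 : (0 : ZMod n).val = 0 := ZMod.val_zero
    simp only [φ, LinearMap.coe_mk, AddHom.coe_mk]
    rw [dif_neg (by omega), dif_pos h0]
    simp only [h1]
    rw [sub_zero]
    congr 1
  have hker : LinearMap.ker φ = Submodule.span ℤ {(fun _ => (-1 : ℤ) : ZMod n → ℤ)} := by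
    apply le_antisymm
    · intro f hf
      rw [Submodule.mem_span_singleton]
      refine ⟨-f 0, ?_⟩
      have hf' : ∀ i : Fin (n - 1), f (((i : ℕ) + 1 : ℕ) : ZMod n) = f 0 := by
        intro i
        have := congrFun (LinearMap.mem_ker.mp hf) i
        simp only [φ, LinearMap.coe_mk, AddHom.coe_mk, Pi.zero_apply] at this
        linarith
      funext j
      have hconst : f j = f 0 := by
        by_cases h : j.val = 0
        · have : j = 0 := by
            have := ZMod.natCast_rightInverse (n := n) j
            rw [← this, h]; simp
          rw [this]
        · have hlt := ZMod.val_lt j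
          have := hf' ⟨j.val - 1, by omega⟩
          have hj : ((j.val - 1 : ℕ) + 1 : ℕ) = j.val := by omega
          rw [hj] at this
          rwa [ZMod.natCast_rightInverse j] at this
      simp [hconst]
    · rw [Submodule.span_le, Set.singleton_subset_iff]
      simp only [SetLike.mem_coe, LinearMap.mem_ker]
      funext i
      simp [φ]
  exact ⟨(Submodule.quotEquivOfEq _ _ hker.symm).trans (φ.quotKerEquivOfSurjective hsurj)⟩

end Aux

theorem abelianization_free_rank (n : ℕ) (k : ℤ) (hn : 3 ≤ n)
    (hgcd : Int.gcd (n : ℤ) (2 - k) = 1) :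
    Nonempty (((ZMod n → ℤ) ⧸ Submodule.span ℤ
        {fun j : ZMod n => ∑ i : Fin n,
          ((if ((i : ℕ) : ZMod n) * ((2 - k : ℤ) : ZMod n) = j then (1 : ℤ) else 0)
            - (if ((i : ℕ) : ZMod n) * ((2 - k : ℤ) : ZMod n) + 1 = j then 1 else 0)
            - (if (((i : ℕ) : ZMod n) + 1) * ((2 - k : ℤ) : ZMod n) - 1 = j then 1 else 0))})
      ≃ₗ[ℤ] (Fin (n - 1) → ℤ)) := by
  rw [vec_eq n k hn hgcd]
  exact quot_equiv n hn
end
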